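/- arXiv:0708.3072 — 5 statements merged into one kernel-verified Lean document; each statement's English description precedes it below -/
import Mathlib

section
/- Let A be a nonzero unital C*-algebra, let n ≥ 2, and let h₁, …, hₙ be self-adjoint elements of A. Then the n×n matrix whose (i,j) entry is hᵢhⱼ is not invertible in the matrix ring Mₙ(A). -/
/-- Lemma 2.6: In a nonzero unital C*-algebra, for `n ≥ 2` self-adjoint elements
`h₁, …, hₙ`, the matrix `(hᵢhⱼ)` is not invertible in `Mₙ(A)`. -/
theorem stmt0 (A : Type*) [CStarAlgebra A] [Nontrivial A]
    (n : ℕ) (hn : 2 ≤ n) (h : Fin n → A) (hsa : ∀ i, IsSelfAdjoint (h i)) :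
    ¬ IsUnit ((Matrix.of fun i j => h i * h j) : Matrix (Fin n) (Fin n) A) := by
  intro hunit
  obtain ⟨u, hu⟩ := hunit
  set M : Matrix (Fin n) (Fin n) A := Matrix.of fun i j => h i * h j with hM
  set N : Matrix (Fin n) (Fin n) A := (u⁻¹).val with hN
  have hMN : M * N = 1 := by rw [hN, ← hu]; exact u.mul_inv
  have hNM : N * M = 1 := by rw [hN, ← hu]; exact u.inv_mul
  set i0 : Fin n := ⟨0, by omega⟩ with hi0
  set i1 : Fin n := ⟨1, by omega⟩ with hi1
  have h01 : i1 ≠ i0 := by simp [hi0, hi1, Fin.ext_iff]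
  set r : A := ∑ k, h k * N k i0 with hr
  have key : ∀ i : Fin n, h i * r = (1 : Matrix (Fin n) (Fin n) A) i i0 := by
    intro i
    have := congrFun (congrFun hMN i) i0
    rw [Matrix.mul_apply] at this
    rw [← this, hr, Finset.mul_sum]
    apply Finset.sum_congr rfl
    intro k _
    simp [hM, mul_assoc]
  set s : A := ∑ k, N i1 k * h k with hs
  have key2 : s * h i1 = (1 : Matrix (Fin n) (Fin n) A) i1 i1 := by
    have := congrFun (congrFun hNM i1) i1
    rw [Matrix.mul_apply] at this
    rw [← this, hs, Finset.sum_mul]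
    apply Finset.sum_congr rfl
    intro k _
    simp [hM, mul_assoc]
  have e1 : h i0 * r = 1 := by rw [key i0, Matrix.one_apply_eq]
  have e2 : h i1 * r = 0 := by rw [key i1, Matrix.one_apply_ne h01]
  have e3 : s * h i1 = 1 := by rw [key2, Matrix.one_apply_eq]
  have hr0 : r = 0 := by
    calc r = (s * h i1) * r := by rw [e3, one_mul]
    _ = s * (h i1 * r) := by rw [mul_assoc]
    _ = 0 := by rw [e2, mul_zero]
  rw [hr0, mul_zero] at e1
  exact zero_ne_one e1
end

section
/- Let A be a unital C*-algebra, let p ∈ A be a projection (p = p* = p²), let k ∈ A with k ≥ 0, and let δ > 0 be a real number. Denote by (k − δ²·1)₋ the negative part (in the sense of continuous functional calculus) of the self-adjoint element k − δ²·1. If ‖(1−p)(k − δ²·1)₋(1−p)‖ < (3/4)δ², then (1−p) k (1−p) ≥ (δ²/4)(1−p) in the order on self-adjoint elements of A. -/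
/-- If `‖(1-p)(k - δ²·1)₋(1-p)‖ < (3/4)δ²`, then `(1-p)k(1-p) ≥ (δ²/4)(1-p)`. -/
theorem stmt4 (A : Type*) [CStarAlgebra A] [PartialOrder A] [StarOrderedRing A]
    (p : A) (hp : IsSelfAdjoint p) (hp2 : p * p = p)
    (k : A) (hk : 0 ≤ k) (δ : ℝ) (hδ : 0 < δ)
    (h : ‖(1 - p) * (k - (δ ^ 2 : ℝ) • 1)⁻ * (1 - p)‖ < 3 / 4 * δ ^ 2) :
    (δ ^ 2 / 4 : ℝ) • (1 - p) ≤ (1 - p) * k * (1 - p) := by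
  set q : A := 1 - p with hq_def
  have hq : IsSelfAdjoint q := by
    simp [hq_def, IsSelfAdjoint, star_sub, hp.star_eq]
  have hq2 : q * q = q := by
    simp only [hq_def, sub_mul, mul_sub, one_mul, mul_one, hp2]; abel
  have hqnn : 0 ≤ q := by
    have := star_mul_self_nonneg q
    rwa [hq.star_eq, hq2] at this
  set m : A := k - (δ ^ 2 : ℝ) • 1 with hm_def
  have hm : IsSelfAdjoint m := by
    simp [hm_def, IsSelfAdjoint, star_sub, star_smul, hk.isSelfAdjoint.star_eq]
  -- k ≥ δ² • 1 - m⁻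
  have key : (δ ^ 2 : ℝ) • (1 : A) - m⁻ ≤ k := by
    have h1 : m⁺ - m⁻ = m := CFC.posPart_sub_negPart m hm
    have h2 : (0 : A) ≤ m⁺ := CFC.posPart_nonneg m
    have h3 : m + m⁻ = m⁺ := (sub_eq_iff_eq_add.mp h1).symm
    have h4 : k - ((δ ^ 2 : ℝ) • (1 : A) - m⁻) = m + m⁻ := by rw [hm_def]; abel
    exact sub_nonneg.mp (by rw [h4, h3]; exact h2)
  -- conjugate by q
  have key2 : q * ((δ ^ 2 : ℝ) • (1 : A) - m⁻) * q ≤ q * k * q :=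
    hq.conjugate_le_conjugate key
  have hconj : q * ((δ ^ 2 : ℝ) • (1 : A) - m⁻) * q
      = (δ ^ 2 : ℝ) • q - q * m⁻ * q := by
    simp [mul_sub, sub_mul, mul_smul_comm, smul_mul_assoc, hq2]
  rw [hconj] at key2
  -- bound q m⁻ q
  set x : A := q * m⁻ * q with hx_def
  have hxsa : IsSelfAdjoint x := by
    have : star (q * m⁻ * q) = q * m⁻ * q := by
      simp [star_mul, hq.star_eq, (CFC.negPart_nonneg m).isSelfAdjoint.star_eq, mul_assoc]
    exact this
  have hxle : x ≤ ‖x‖ • (1 : A) := by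
    have := IsSelfAdjoint.le_algebraMap_norm_self (a := x) hxsa
    rwa [Algebra.algebraMap_eq_smul_one] at this
  have hxle2 : x ≤ ‖x‖ • q := by
    have hcc := hq.conjugate_le_conjugate hxle
    have e1 : q * x * q = x := by
      rw [hx_def]
      calc q * (q * m⁻ * q) * q = (q * q) * m⁻ * (q * q) := by
            simp only [mul_assoc]
        _ = q * m⁻ * q := by rw [hq2]
    have e2 : q * (‖x‖ • (1 : A)) * q = ‖x‖ • q := by
      simp [mul_smul_comm, smul_mul_assoc, hq2]
    rwa [e1, e2] at hcc
  have hxle3 : (‖x‖ : ℝ) • q ≤ (3 / 4 * δ ^ 2 : ℝ) • q := by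
    rw [← sub_nonneg, ← sub_smul]
    exact smul_nonneg (by linarith [h]) hqnn
  have hx4 : x ≤ (3 / 4 * δ ^ 2 : ℝ) • q := hxle2.trans hxle3
  -- combine
  have final : (δ ^ 2 : ℝ) • q - (3 / 4 * δ ^ 2 : ℝ) • q ≤ q * k * q :=
    (sub_le_sub_left hx4 _).trans key2
  have heq : (δ ^ 2 : ℝ) • q - (3 / 4 * δ ^ 2 : ℝ) • q = (δ ^ 2 / 4 : ℝ) • q := by
    rw [← sub_smul]; ring_nf
  rwa [heq] at final
end

section
/- Let A be a unital C*-algebra, let p ∈ A be a projection (p = p* = p²), let z ∈ A satisfy z = zp, and suppose there is a real δ > 0 with p z* z p ≥ δ² p. Then there exists w ∈ A such that w* w = p and (w w*) z = z; in particular q = w w* is a projection in A with q z = z, and q is Murray–von Neumann equivalent to p. -/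
/-!
Since `z = zp`, the positive element `z*z` lives in the corner `pAp`, where it dominates `δ²p`.
Filling the complementary corner with `δ²(1 - p)` gives `c = z*z + δ²(1 - p) ≥ δ²`, which is
invertible, commutes with `p` and satisfies `z*z = cp`. Then `w = z c^(-1/2)` has
`w*w = c^(-1/2) c p c^(-1/2) = p` and `ww*z = z c^(-1) c p = zp = z`.
-/

open CFC

section Corner

variable {A : Type*} [Ring A] [Algebra ℝ A] {p a : A}

lemma IsIdempotentElem.add_smul_one_sub_mul (hp : IsIdempotentElem p) (ha : a * p = a) (r : ℝ) :
    (a + r • (1 - p)) * p = a := by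
  rw [add_mul, smul_mul_assoc, sub_mul, one_mul, hp.eq, sub_self, smul_zero, add_zero, ha]

lemma IsIdempotentElem.commute_add_smul_one_sub (hp : IsIdempotentElem p) (hpa : p * a = a)
    (ha : a * p = a) (r : ℝ) : Commute p (a + r • (1 - p)) := by
  rw [Commute, SemiconjBy, hp.add_smul_one_sub_mul ha, mul_add, mul_smul_comm, mul_sub,
    mul_one, hp.eq, sub_self, smul_zero, add_zero, hpa]

lemma smul_one_le_add_smul_one_sub [PartialOrder A] [IsOrderedAddMonoid A] {r : ℝ}
    (h : r • p ≤ a) : r • (1 : A) ≤ a + r • (1 - p) := by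
  rwa [smul_sub, add_sub_left_comm, le_add_iff_nonneg_right, sub_nonneg]

end Corner

section RpowNegOneHalf

variable {A : Type*} [CStarAlgebra A] [PartialOrder A] [StarOrderedRing A] {c p z : A}

lemma star_mul_self_mul_rpow_neg_one_half (hc : IsStrictlyPositive c) (hpc : Commute p c)
    (hz : star z * z = c * p) :
    star (z * c ^ (-(1 / 2) : ℝ)) * (z * c ^ (-(1 / 2) : ℝ)) = p := by
  set s := c ^ (-(1 / 2) : ℝ)
  have hsp : Commute s p := hpc.symm.cfc_nnreal _
  calc star (z * s) * (z * s) = s * (c * p) * s := by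
        rw [star_mul, rpow_nonneg.isSelfAdjoint.star_eq, ← hz]; noncomm_ring
    _ = s * c * s * p := by rw [← mul_assoc s c p, mul_assoc (s * c) p s, ← hsp.eq, ← mul_assoc]
    _ = p := by rw [conjugate_rpow_neg_one_half c, one_mul]

lemma mul_star_mul_rpow_neg_one_half_mul (hc : IsStrictlyPositive c) (hz : star z * z = c * p) :
    z * c ^ (-(1 / 2) : ℝ) * star (z * c ^ (-(1 / 2) : ℝ)) * z = z * p := by
  set s := c ^ (-(1 / 2) : ℝ)
  have hsc : Commute s c := (Commute.refl c).cfc_nnreal _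
  calc z * s * star (z * s) * z = z * (s * (c * s)) * p := by
        rw [star_mul, rpow_nonneg.isSelfAdjoint.star_eq, ← hsc.eq]; simp only [mul_assoc, hz]
    _ = z * p := by rw [← mul_assoc s c s, conjugate_rpow_neg_one_half c, mul_one]

end RpowNegOneHalf

/-- If `z = zp` with `p` a projection and `p z* z p ≥ δ² p` for some `δ > 0`, then
there is `w` with `w*w = p` and `(ww*)z = z`, i.e. the range projection `q = ww*`
of `z` satisfies `qz = z` and is Murray–von Neumann equivalent to `p`. -/
theorem stmt5 (A : Type*) [CStarAlgebra A] [PartialOrder A] [StarOrderedRing A]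
    (p z : A) (hp : IsSelfAdjoint p) (hp2 : p * p = p)
    (hz : z = z * p) (δ : ℝ) (hδ : 0 < δ)
    (hbound : (δ ^ 2 : ℝ) • p ≤ p * star z * z * p) :
    ∃ w : A, star w * w = p ∧ (w * star w) * z = z := by
  have hp_star_z : p * star z = star z := by
    conv_rhs => rw [hz, star_mul, hp.star_eq]
  have hp_zz : p * (star z * z) = star z * z := by rw [← mul_assoc, hp_star_z]
  have hzz_p : star z * z * p = star z * z := by rw [mul_assoc, ← hz]
  set c := star z * z + δ ^ 2 • (1 - p)
  have hc : IsStrictlyPositive c := by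
    refine (isStrictlyPositive_algebraMap (pow_pos hδ 2)).of_le ?_
    rw [Algebra.algebraMap_eq_smul_one]
    refine smul_one_le_add_smul_one_sub ?_
    rwa [hp_star_z, mul_assoc, ← hz] at hbound
  have hc_p : star z * z = c * p := (IsIdempotentElem.add_smul_one_sub_mul hp2 hzz_p _).symm
  refine ⟨z * c ^ (-(1 / 2) : ℝ), ?_, ?_⟩
  · exact star_mul_self_mul_rpow_neg_one_half hc
      (IsIdempotentElem.commute_add_smul_one_sub hp2 hp_zz hzz_p _) hc_p
  · rw [mul_star_mul_rpow_neg_one_half_mul hc hc_p, ← hz]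
end

section
/- Let X be a topological space which can be written as X = ⋃ₙ∈ℕ Fₙ, where each Fₙ is a closed and compact subset of X. Then every open cover of X admits a point-finite open refinement covering X; that is, for every family {Uᵢ} of open sets with ⋃ᵢ Uᵢ = X there is a family {Wⱼ} of open sets such that ⋃ⱼ Wⱼ = X, each Wⱼ is contained in some Uᵢ, and every point of X belongs to only finitely many of the sets Wⱼ. -/
/-- A space which is a countable union of closed compact sets is metacompact:
every open cover has a point-finite open refinement. -/
theorem stmt7 (X : Type*) [TopologicalSpace X] (F : ℕ → Set X)
    (hclosed : ∀ n, IsClosed (F n)) (hcompact : ∀ n, IsCompact (F n))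
    (hcover : ⋃ n, F n = Set.univ) :
    ∀ (ι : Type*) (U : ι → Set X), (∀ i, IsOpen (U i)) → (⋃ i, U i) = Set.univ →
      ∃ W : Set (Set X), (∀ w ∈ W, IsOpen w) ∧ ⋃₀ W = Set.univ ∧
        (∀ w ∈ W, ∃ i, w ⊆ U i) ∧ ∀ x : X, {w ∈ W | x ∈ w}.Finite := by
  intro ι U hUopen hUcover
  classical
  -- the increasing sequence of closed compact sets
  set K : ℕ → Set X := fun n => ⋃ k ∈ Finset.range (n + 1), F k with hKdef
  have hKclosed : ∀ n, IsClosed (K n) := fun n =>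
    (Finset.range (n + 1)).finite_toSet.isClosed_biUnion (fun k _ => hclosed k)
  have hKcompact : ∀ n, IsCompact (K n) := fun n =>
    (Finset.range (n + 1)).finite_toSet.isCompact_biUnion (fun k _ => hcompact k)
  have hKmono : ∀ {m n : ℕ}, m ≤ n → K m ⊆ K n := by
    intro m n hmn x hx
    simp only [hKdef, Set.mem_iUnion, Finset.mem_range] at hx ⊢
    obtain ⟨k, hk, hxk⟩ := hx
    exact ⟨k, by omega, hxk⟩
  have hFK : ∀ n, F n ⊆ K n := fun n =>
    Set.subset_biUnion_of_mem (Finset.self_mem_range_succ n)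
  -- finite subcovers
  have hsub : ∀ n, ∃ t : Finset ι, K n ⊆ ⋃ i ∈ t, U i := by
    intro n
    exact (hKcompact n).elim_finite_subcover U hUopen
      (by rw [hUcover]; exact Set.subset_univ _)
  choose S hS using hsub
  -- the "previous" closed set
  set P : ℕ → Set X := fun n => match n with | 0 => (∅ : Set X) | k + 1 => K k
    with hPdef
  have hPclosed : ∀ n, IsClosed (P n) := by
    intro n; cases n with
    | zero => exact isClosed_empty
    | succ k => exact hKclosed k
  -- the refinement
  set W : Set (Set X) := {w | ∃ n, ∃ i ∈ S n, w = U i \ P n} with hWdef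
  refine ⟨W, ?_, ?_, ?_, ?_⟩
  · rintro w ⟨n, i, _, rfl⟩
    exact (hUopen i).sdiff (hPclosed n)
  · apply Set.eq_univ_of_forall
    intro x
    have hx : ∃ m, x ∈ K m := by
      have : x ∈ ⋃ n, F n := by rw [hcover]; trivial
      obtain ⟨m, hm⟩ := Set.mem_iUnion.1 this
      exact ⟨m, hFK m hm⟩
    let n := Nat.find hx
    have hxn : x ∈ K n := Nat.find_spec hx
    have hxP : x ∉ P n := by
      cases hn : n with
      | zero => simp [hPdef]
      | succ k =>
        have : ¬ x ∈ K k := Nat.find_min hx (by omega)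
        simpa [hPdef] using this
    obtain ⟨i, hi, hxi⟩ := Set.mem_iUnion₂.1 (hS n hxn)
    exact Set.mem_sUnion.2 ⟨U i \ P n, ⟨n, i, hi, rfl⟩, hxi, hxP⟩
  · rintro w ⟨n, i, _, rfl⟩
    exact ⟨i, Set.diff_subset⟩
  · intro x
    have hx : ∃ m, x ∈ K m := by
      have : x ∈ ⋃ n, F n := by rw [hcover]; trivial
      obtain ⟨m, hm⟩ := Set.mem_iUnion.1 this
      exact ⟨m, hFK m hm⟩
    obtain ⟨m, hm⟩ := hx
    have hfin : (⋃ n ∈ Finset.range (m + 2),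
        (fun i => U i \ P n) '' (S n : Set ι)).Finite :=
      Set.Finite.biUnion (Finset.range (m + 2)).finite_toSet
        (fun n _ => ((S n).finite_toSet.image _))
    apply hfin.subset
    rintro w ⟨⟨n, i, hi, rfl⟩, hxw⟩
    have hn : n ≤ m + 1 := by
      by_contra h
      push_neg at h
      have : x ∈ P n := by
        cases hn' : n with
        | zero => omega
        | succ k =>
          have : K m ⊆ K k := hKmono (by omega)
          simpa [hPdef] using this hm
      exact hxw.2 this
    exact Set.mem_biUnion (Finset.mem_range.2 (by omega)) ⟨i, hi, rfl⟩
end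

section
/- Let X be a topological space such that every point of X has an open neighborhood contained in a compact subset of X, and such that X = ⋃ₙ∈ℕ Fₙ where each Fₙ is closed and compact. Then X admits a point-finite open cover {Uⱼ} such that each Uⱼ is contained in a compact subset of X. -/
/-- A locally (quasi-)compact space which is a countable union of closed compact sets
admits a point-finite open cover whose members are contained in compact sets. -/
theorem stmt9 (X : Type*) [TopologicalSpace X]
    (hloc : ∀ x : X, ∃ U K : Set X, IsOpen U ∧ x ∈ U ∧ IsCompact K ∧ U ⊆ K)
    (F : ℕ → Set X) (hclosed : ∀ n, IsClosed (F n)) (hcompact : ∀ n, IsCompact (F n))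
    (hcover : ⋃ n, F n = Set.univ) :
    ∃ 𝒰 : Set (Set X), (∀ U ∈ 𝒰, IsOpen U) ∧ ⋃₀ 𝒰 = Set.univ ∧
      (∀ U ∈ 𝒰, ∃ K, IsCompact K ∧ U ⊆ K) ∧ ∀ x : X, {U ∈ 𝒰 | x ∈ U}.Finite := by
  choose V K hVopen hmemV hKcomp hVK using hloc
  have key : ∀ n : ℕ, ∃ W C : Set X, IsOpen W ∧ IsCompact C ∧
      (⋃ k ∈ Set.Iic n, F k) ⊆ W ∧ W ⊆ C := by
    intro n
    have hD : IsCompact (⋃ k ∈ Set.Iic n, F k) :=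
      (Set.finite_Iic n).isCompact_biUnion fun k _ => hcompact k
    obtain ⟨t, ht⟩ := hD.elim_finite_subcover V hVopen
      (fun x _ => Set.mem_iUnion.2 ⟨x, hmemV x⟩)
    exact ⟨⋃ x ∈ t, V x, ⋃ x ∈ t, K x, isOpen_biUnion fun x _ => hVopen x,
      t.isCompact_biUnion fun x _ => hKcomp x, ht,
      Set.iUnion₂_mono fun x _ => hVK x⟩
  choose W C hWopen hCcomp hFW hWC using key
  set U : ℕ → Set X := fun n => W n \ ⋃ k ∈ Set.Iio n, F k with hU
  have hDclosed : ∀ n : ℕ, IsClosed (⋃ k ∈ Set.Iio n, F k) := fun n =>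
    (Set.finite_Iio n).isClosed_biUnion fun k _ => hclosed k
  refine ⟨Set.range U, ?_, ?_, ?_, ?_⟩
  · rintro _ ⟨n, rfl⟩
    exact (hWopen n).sdiff (hDclosed n)
  · apply Set.eq_univ_of_forall
    intro x
    have hx : ∃ n, x ∈ F n := by
      have := hcover ▸ Set.mem_univ x
      exact Set.mem_iUnion.1 this
    classical
    let n := Nat.find hx
    refine ⟨U n, ⟨n, rfl⟩, ?_, ?_⟩
    · exact hFW n (Set.mem_biUnion (Set.mem_Iic.2 le_rfl) (Nat.find_spec hx))
    · intro hxm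
      obtain ⟨k, hk, hxk⟩ := Set.mem_iUnion₂.1 hxm
      exact Nat.find_min hx hk hxk
  · rintro _ ⟨n, rfl⟩
    exact ⟨C n, hCcomp n, (Set.diff_subset).trans (hWC n)⟩
  · intro x
    have hx : ∃ n, x ∈ F n := by
      have := hcover ▸ Set.mem_univ x
      exact Set.mem_iUnion.1 this
    obtain ⟨m, hm⟩ := hx
    apply Set.Finite.subset ((Set.finite_Iic m).image U)
    rintro _ ⟨⟨n, rfl⟩, hxU⟩
    refine ⟨n, Set.mem_Iic.2 ?_, rfl⟩
    by_contra h
    exact hxU.2 (Set.mem_biUnion (Set.mem_Iio.2 (lt_of_not_ge h)) hm)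
end
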